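/- arXiv:2209.07860 — 3 statements merged into one kernel-verified Lean document; each statement's English description precedes it below -/
import Mathlib

section
/- Let (G, L, c, r, e_r) be a rooted WRAP instance and let F⃗ ⊆ V × V be a non-shortenable directed WRAP solution. Then: (i) (V, F⃗) is an r-arborescence, i.e., every vertex v ∈ V \ {r} has exactly one incoming directed link, r has none, and (V, F⃗) contains no cycle when orientations are disregarded; (ii) F⃗ is G-planar, i.e., no two directed links of F⃗ are crossing (orientations disregarded); (iii) for every v ∈ V, the set of directed links of F⃗ with tail v contains at most one left-going and at most one right-going link. -/
/-!
Common definitions for the Weighted Ring Augmentation Problem (WRAP).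

A rooted WRAP instance `(G, L, c, r, e_r)` has a ring graph `G` whose
vertices we identify with `Fin n`, numbered `r = 0, 1, …, n-1` in the order
in which they appear along the path `(V, E \ {e_r})` starting at the root
`r = 0`.  Vertex `i` is to the left of `j` iff `i < j`.
-/

/-- An undirected link: an unordered pair of distinct vertices of the ring,
recorded via its left endpoint `lo` and its right endpoint `hi`. -/
structure Link (n : ℕ) where
  lo : Fin n
  hi : Fin n
  lo_lt_hi : lo < hi

instance {n : ℕ} : DecidableEq (Link n) := fun a b =>
  decidable_of_iff (a.lo = b.lo ∧ a.hi = b.hi) (by cases a; cases b; simp)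

/-- A directed link: an ordered pair of distinct vertices. -/
structure DLink (n : ℕ) where
  tail : Fin n
  head : Fin n
  ne : tail ≠ head

instance {n : ℕ} : DecidableEq (DLink n) := fun a b =>
  decidable_of_iff (a.tail = b.tail ∧ a.head = b.head) (by cases a; cases b; simp)

variable {n : ℕ}

/-- The underlying undirected link of a directed link. -/
def DLink.toLink (d : DLink n) : Link n :=
  ⟨min d.tail d.head, max d.tail d.head, min_lt_max.mpr d.ne⟩

/-- `ℓ` is incident to `v`. -/
def Link.Incident (ℓ : Link n) (v : Fin n) : Prop := ℓ.lo = v ∨ ℓ.hi = v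

/-- The 2-cuts `C_G` of the ring: the nonempty intervals of consecutive
vertices along the path `(V, E \ {e_r})` that do not contain the root `0`. -/
def IsCut [NeZero n] (C : Finset (Fin n)) : Prop :=
  ∃ a b : Fin n, 0 < a ∧ a ≤ b ∧ C = Finset.Icc a b

/-- `ℓ` has exactly one endpoint in `C`. -/
def crossesCut (ℓ : Link n) (C : Finset (Fin n)) : Prop :=
  (ℓ.lo ∈ C ∧ ℓ.hi ∉ C) ∨ (ℓ.lo ∉ C ∧ ℓ.hi ∈ C)

instance (ℓ : Link n) (C : Finset (Fin n)) : Decidable (crossesCut ℓ C) := by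
  unfold crossesCut; infer_instance

/-- `δ_K(C)`: the links of `K` with exactly one endpoint in `C`. -/
def cutLinks (K : Finset (Link n)) (C : Finset (Fin n)) : Finset (Link n) :=
  K.filter (fun ℓ => crossesCut ℓ C)

/-- An (undirected) WRAP solution: every 2-cut is covered by some link. -/
def IsSolution [NeZero n] (S : Finset (Link n)) : Prop :=
  ∀ C : Finset (Fin n), IsCut C → (cutLinks S C).Nonempty

/-- A directed link covers a 2-cut if it enters it. -/
def DCovers (d : DLink n) (C : Finset (Fin n)) : Prop := d.tail ∉ C ∧ d.head ∈ C

/-- A directed WRAP solution: every 2-cut is entered by some directed link. -/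
def IsDirSolution [NeZero n] (F : Finset (DLink n)) : Prop :=
  ∀ C : Finset (Fin n), IsCut C → ∃ d ∈ F, DCovers d C

/-- `d'` is a shortening of `d`: same head, and the tail of `d'` lies on the
unique path between the endpoints of `d` in `(V, E \ {e_r})`. -/
def IsShortening (d' d : DLink n) : Prop :=
  d'.head = d.head ∧ min d.tail d.head ≤ d'.tail ∧ d'.tail ≤ max d.tail d.head

/-- A non-shortenable directed WRAP solution: deleting any link, or replacing
any link by a strict shortening of it, destroys feasibility. -/
def NonShortenable [NeZero n] (F : Finset (DLink n)) : Prop :=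
  IsDirSolution F ∧
    (∀ d ∈ F, ¬ IsDirSolution (F.erase d)) ∧
    (∀ d ∈ F, ∀ d' : DLink n, IsShortening d' d → d' ≠ d →
      ¬ IsDirSolution (insert d' (F.erase d)))

/-- `d` is a shadow of the undirected link `ℓ`: a shortening of one of the two
orientations of `ℓ`. -/
def IsShadow (d : DLink n) (ℓ : Link n) : Prop :=
  (d.head = ℓ.lo ∨ d.head = ℓ.hi) ∧ ℓ.lo ≤ d.tail ∧ d.tail ≤ ℓ.hi

/-- `u` is a descendant of `v` in `(V, F)` (every vertex is a descendant of
itself). -/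
def Descend (F : Finset (DLink n)) (v u : Fin n) : Prop :=
  Relation.ReflTransGen (fun a b => ∃ d ∈ F, d.tail = a ∧ d.head = b) v u

/-- `u` is `v`-good: not a descendant of `v` in `(V, F)`. -/
def VGood (F : Finset (DLink n)) (v u : Fin n) : Prop := ¬ Descend F v u

/-- `w` is the least common ancestor of the vertex set `U` in `(V, F)`. -/
def IsLCA (F : Finset (DLink n)) (w : Fin n) (U : Set (Fin n)) : Prop :=
  (∀ u ∈ U, Descend F w u) ∧ ∀ x : Fin n, (∀ u ∈ U, Descend F x u) → Descend F x w

/-- `d = (u,v)` is responsible for the 2-cut `C`: it covers `C` and no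
directed link of `F` on the `r`–`u` path in the arborescence `(V, F)`
(i.e. no link of `F` whose head is an ancestor of `u`) covers `C`. -/
def Responsible [NeZero n] (F : Finset (DLink n)) (d : DLink n)
    (C : Finset (Fin n)) : Prop :=
  IsCut C ∧ DCovers d C ∧
    ∀ d' ∈ F, Descend F d'.head d.tail → ¬ DCovers d' C

/-- `Drop_F(K)`: directed links of `F` all of whose responsible cuts
are covered by `K`. -/
def Drop [NeZero n] (F : Finset (DLink n)) (K : Finset (Link n)) : Set (DLink n) :=
  {d | d ∈ F ∧ ∀ C : Finset (Fin n), Responsible F d C → (cutLinks K C).Nonempty}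

/-- Two links are crossing: their endpoints interleave along the ring. -/
def Crossing (ℓ f : Link n) : Prop :=
  (ℓ.lo < f.lo ∧ f.lo < ℓ.hi ∧ ℓ.hi < f.hi) ∨
  (f.lo < ℓ.lo ∧ ℓ.lo < f.hi ∧ f.hi < ℓ.hi)

/-- Two links intersect: they share an endpoint or cross. -/
def Intersects (ℓ f : Link n) : Prop :=
  (ℓ.lo = f.lo ∨ ℓ.lo = f.hi ∨ ℓ.hi = f.lo ∨ ℓ.hi = f.hi) ∨ Crossing ℓ f

/-- The vertex `u` is connected to the vertex `w` in the link intersection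
graph `H[K]`: there is a path in `H[K]` from a link incident to `u` to a link
incident to `w`. -/
def ConnVert (K : Finset (Link n)) (u w : Fin n) : Prop :=
  ∃ ℓ ∈ K, ∃ f ∈ K, ℓ.Incident u ∧ f.Incident w ∧
    Relation.ReflTransGen (fun a b => a ∈ K ∧ b ∈ K ∧ Intersects a b) ℓ f

/-- The link intersection graph `H[S]` is connected. -/
def ConnLinkSet (S : Finset (Link n)) : Prop :=
  ∀ ℓ ∈ S, ∀ f ∈ S,
    Relation.ReflTransGen (fun a b => a ∈ S ∧ b ∈ S ∧ Intersects a b) ℓ f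

/-- `V(S)`: the vertices incident to a link of `S`. -/
def linkVerts (S : Finset (Link n)) : Set (Fin n) := {v | ∃ ℓ ∈ S, ℓ.Incident v}

/-- A festoon order: the links (listed as `f 0, f 1, …`) form a path in the
link intersection graph visited in this order, with both left endpoints and
right endpoints strictly increasing. -/
def IsFestoonSeq {p : ℕ} (f : Fin p → Link n) : Prop :=
  (∀ i j : Fin p, i < j → (f i).lo < (f j).lo ∧ (f i).hi < (f j).hi) ∧
  (∀ i j : Fin p, (i : ℕ) + 1 = (j : ℕ) → Intersects (f i) (f j)) ∧
  (∀ i j : Fin p, (i : ℕ) + 1 < (j : ℕ) → ¬ Intersects (f i) (f j))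

/-- A festoon: a nonempty link set admitting a festoon order. -/
def IsFestoon (X : Finset (Link n)) : Prop :=
  ∃ p : ℕ, 0 < p ∧ ∃ f : Fin p → Link n,
    IsFestoonSeq f ∧ X = Finset.image f Finset.univ

/-- The festoon interval `I_X`: the interval from the leftmost endpoint of a
link of `X` to the rightmost endpoint of a link of `X`. -/
def festoonIval (X : Finset (Link n)) : Set (Fin n) :=
  {w | (∃ ℓ ∈ X, ℓ.lo ≤ w) ∧ ∃ ℓ ∈ X, w ≤ ℓ.hi}

/-- Two festoons are tangled: some link of one intersects some link of the
other. -/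
def Tangled (X Y : Finset (Link n)) : Prop :=
  ∃ ℓ ∈ X, ∃ f ∈ Y, Intersects ℓ f

/-- A laminar family of vertex sets: any two members are nested or disjoint. -/
def Laminar (𝓛 : Set (Finset (Fin n))) : Prop :=
  ∀ A ∈ 𝓛, ∀ B ∈ 𝓛, A ⊆ B ∨ B ⊆ A ∨ Disjoint A B

/-- An inclusion-wise maximal laminar subfamily of `C_G`. -/
def MaxLaminarCuts [NeZero n] (𝓛 : Set (Finset (Fin n))) : Prop :=
  (∀ C ∈ 𝓛, IsCut C) ∧ Laminar 𝓛 ∧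
    ∀ C : Finset (Fin n), IsCut C → C ∉ 𝓛 → ¬ Laminar (insert C 𝓛)

/-- An `α`-thin link set. -/
def IsThin [NeZero n] (α : ℕ) (K : Finset (Link n)) : Prop :=
  ∃ 𝓛 : Set (Finset (Fin n)), MaxLaminarCuts 𝓛 ∧ ∀ C ∈ 𝓛, (cutLinks K C).card ≤ α

/-- The set `𝒳` of festoons connects `v` to a `v`-good vertex. -/
def ConnectsToGood (F : Finset (DLink n)) (v : Fin n)
    (𝒳 : Finset (Finset (Link n))) : Prop :=
  ∃ w : Fin n, VGood F v w ∧ ConnVert (𝒳.biUnion id) v w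

/-- The undirected graph obtained from a set of directed links by
disregarding orientations. -/
def undirGraph (F : Finset (DLink n)) : SimpleGraph (Fin n) where
  Adj a b := ∃ d ∈ F, (d.tail = a ∧ d.head = b) ∨ (d.tail = b ∧ d.head = a)
  symm := by
    constructor
    rintro a b ⟨d, hd, h⟩
    exact ⟨d, hd, h.symm⟩
  loopless := by
    constructor
    rintro a ⟨d, hd, h⟩
    rcases h with ⟨h1, h2⟩ | ⟨h1, h2⟩ <;> exact d.ne (h1.trans h2.symm)

/-- A directed link going to the left along the ring. -/
def LeftGoing (d : DLink n) : Prop := d.head < d.tail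

/-- A directed link going to the right along the ring. -/
def RightGoing (d : DLink n) : Prop := d.tail < d.head


/-!
Everything rests on private cuts. Since deleting a link `d` of `F` destroys feasibility, some
2-cut is entered by `d` and by no other link of `F`; since replacing `d` by its shortening with
tail `x` destroys it too, such a cut can be chosen to contain any `x` strictly between the
endpoints of `d`. Two links with a common head, two crossing links, or two equally oriented
links with a common tail then yield either a private cut of one link entered by the other, or
two overlapping private cuts whose union, again a 2-cut, no link of `F` can enter.
So in-degrees are at most one. Every vertex is reachable from `r`: a maximal interval of
unreachable vertices is entered by some link, and the private cut of that link through a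
reachable neighbour of the interval would make its tail reachable. Depth from `r` then rules
out undirected cycles, because on a cycle the vertex of maximal depth would have two parents.
-/

theorem SimpleGraph.isAcyclic_of_rank_parent {V α : Type*} [LinearOrder α] {G : SimpleGraph V}
    (rank : V → α) (parent : V → V)
    (h : ∀ ⦃u w⦄, G.Adj u w → rank w ≤ rank u → w = parent u) : G.IsAcyclic := by
  classical
  intro v c hc
  obtain ⟨u, hu, hmax⟩ := c.support.toFinset.exists_max_image rank ⟨v, by simp⟩
  rw [List.mem_toFinset] at hu
  have hc' := hc.rotate hu
  have hparent : ∀ i, G.Adj u ((c.rotate u hu).getVert i) →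
      (c.rotate u hu).getVert i = parent u := fun i hadj =>
    h hadj (hmax _ (List.mem_toFinset.2 ((c.mem_support_rotate_iff u hu).1
      ((c.rotate u hu).getVert_mem_support i))))
  exact hc'.snd_ne_penultimate <| (hparent _ (Walk.adj_snd hc'.not_nil)).trans
    (hparent _ (Walk.adj_penultimate hc'.not_nil).symm).symm

theorem DLink.ext {d e : DLink n} (ht : d.tail = e.tail) (hh : d.head = e.head) : d = e := by
  cases d; cases e; simp_all

theorem dCovers_Icc_iff {d : DLink n} {a b : Fin n} :
    DCovers d (Finset.Icc a b) ↔ a ≤ d.head ∧ d.head ≤ b ∧ (d.tail < a ∨ b < d.tail) := by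
  simp only [DCovers, Finset.mem_Icc, not_and_or, not_le]
  tauto

theorem Descend.exists_dCovers {F : Finset (DLink n)} {C : Finset (Fin n)} {x y : Fin n}
    (h : Descend F x y) (hx : x ∉ C) (hy : y ∈ C) : ∃ d ∈ F, DCovers d C ∧ Descend F x d.tail := by
  induction h with
  | refl => exact absurd hy hx
  | @tail b c hxb hbc ih =>
    by_cases hb : b ∈ C
    · exact ih hb
    · obtain ⟨d, hd, rfl, rfl⟩ := hbc
      exact ⟨d, hd, ⟨hb, hy⟩, hxb⟩

def IsPrivateCut (F : Finset (DLink n)) (d : DLink n) (C : Finset (Fin n)) : Prop :=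
  DCovers d C ∧ ∀ e ∈ F, e ≠ d → ¬ DCovers e C

noncomputable def parent (F : Finset (DLink n)) (v : Fin n) : Fin n :=
  if h : ∃ d ∈ F, d.head = v then h.choose.tail else v

section NonShortenable

variable [NeZero n] {F : Finset (DLink n)} {d d₁ d₂ : DLink n}

theorem isCut_Icc {a b : Fin n} (ha : 0 < a) (hab : a ≤ b) : IsCut (Finset.Icc a b) :=
  ⟨a, b, ha, hab, rfl⟩

theorem IsDirSolution.exists_isPrivateCut (hF : IsDirSolution F) {G : Finset (DLink n)}
    (hG : F.erase d ⊆ G) (hG' : ¬ IsDirSolution G) :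
    ∃ a b : Fin n, 0 < a ∧ (∀ e ∈ G, ¬ DCovers e (Finset.Icc a b)) ∧
      IsPrivateCut F d (Finset.Icc a b) := by
  simp only [IsDirSolution, not_forall, not_exists, not_and] at hG'
  obtain ⟨C, hC, hnone⟩ := hG'
  obtain ⟨e, he, hcov⟩ := hF C hC
  obtain ⟨a, b, ha, -, rfl⟩ := hC
  have hed : e = d := by
    by_contra hed
    exact hnone e (hG (Finset.mem_erase.2 ⟨hed, he⟩)) hcov
  subst hed
  exact ⟨a, b, ha, hnone, hcov, fun e' he' hne => hnone e' (hG (Finset.mem_erase.2 ⟨hne, he'⟩))⟩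

theorem NonShortenable.exists_isPrivateCut (hF : NonShortenable F) (hd : d ∈ F) :
    ∃ a b : Fin n, 0 < a ∧ IsPrivateCut F d (Finset.Icc a b) := by
  obtain ⟨a, b, ha, -, hpriv⟩ := hF.1.exists_isPrivateCut subset_rfl (hF.2.1 d hd)
  exact ⟨a, b, ha, hpriv⟩

theorem NonShortenable.exists_isPrivateCut_mem (hF : NonShortenable F) (hd : d ∈ F) {x : Fin n}
    (hx : d.tail < x ∧ x < d.head ∨ d.head < x ∧ x < d.tail) :
    ∃ a b : Fin n, 0 < a ∧ x ∈ Finset.Icc a b ∧ IsPrivateCut F d (Finset.Icc a b) := by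
  have hxh : x ≠ d.head := by omega
  have hshort : IsShortening ⟨x, d.head, hxh⟩ d := by
    refine ⟨rfl, ?_, ?_⟩ <;> rcases hx with ⟨h₁, h₂⟩ | ⟨h₁, h₂⟩
    exacts [min_le_of_left_le h₁.le, min_le_of_right_le h₁.le,
      le_max_of_le_right h₂.le, le_max_of_le_left h₂.le]
  have hne : (⟨x, d.head, hxh⟩ : DLink n) ≠ d := fun h => by
    have : x = d.tail := congrArg DLink.tail h
    omega
  obtain ⟨a, b, ha, hnone, hpriv⟩ :=
    hF.1.exists_isPrivateCut (Finset.subset_insert _ _) (hF.2.2 d hd _ hshort hne)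
  have hshort_not := hnone _ (Finset.mem_insert_self _ _)
  have hcov := hpriv.1
  rw [dCovers_Icc_iff] at hshort_not hcov
  dsimp only at hshort_not
  exact ⟨a, b, ha, Finset.mem_Icc.2 (by omega), hpriv⟩

theorem NonShortenable.head_ne_zero (hF : NonShortenable F) (hd : d ∈ F) : d.head ≠ 0 := by
  obtain ⟨a, b, ha, hcov, -⟩ := hF.exists_isPrivateCut hd
  rw [dCovers_Icc_iff] at hcov
  omega

/-- Whatever enters the union of two overlapping or abutting cuts enters one of them. -/
theorem IsDirSolution.false_of_isPrivateCut_union (hF : IsDirSolution F) {a₁ b₁ a₂ b₂ : Fin n}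
    (ha₁ : 0 < a₁) (h₁ : IsPrivateCut F d₁ (Finset.Icc a₁ b₁))
    (h₂ : IsPrivateCut F d₂ (Finset.Icc a₂ b₂)) (ha : a₁ ≤ a₂) (hb : b₁ ≤ b₂)
    (hab : a₂.val ≤ b₁.val + 1) (ht₁ : d₁.tail ∈ Finset.Icc a₁ b₂)
    (ht₂ : d₂.tail ∈ Finset.Icc a₁ b₂) : False := by
  have hc₂ := dCovers_Icc_iff.1 h₂.1
  rw [Finset.mem_Icc] at ht₁ ht₂
  obtain ⟨e, he, hcov⟩ := hF _ (isCut_Icc ha₁ (by omega : a₁ ≤ b₂))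
  rw [dCovers_Icc_iff] at hcov
  by_cases hhead : e.head ≤ b₁
  · by_cases he₁ : e = d₁
    · subst he₁
      omega
    · exact h₁.2 e he he₁ (dCovers_Icc_iff.2 (by omega))
  · by_cases he₂ : e = d₂
    · subst he₂
      omega
    · exact h₂.2 e he he₂ (dCovers_Icc_iff.2 (by omega))

theorem NonShortenable.eq_of_head_eq (hF : NonShortenable F) (h₁ : d₁ ∈ F) (h₂ : d₂ ∈ F)
    (hh : d₁.head = d₂.head) : d₁ = d₂ := by
  by_contra hne
  have ht : d₁.tail ≠ d₂.tail := fun ht => hne (DLink.ext ht hh)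
  wlog hlt : d₁.tail < d₂.tail generalizing d₁ d₂
  · exact this h₂ h₁ hh.symm (Ne.symm hne) ht.symm (lt_of_le_of_ne (not_lt.1 hlt) ht.symm)
  obtain ⟨a₁, b₁, -, hpriv₁⟩ := hF.exists_isPrivateCut h₁
  obtain ⟨a₂, b₂, ha₂, hpriv₂⟩ := hF.exists_isPrivateCut h₂
  have hc₁ := dCovers_Icc_iff.1 hpriv₁.1
  have hc₂ := dCovers_Icc_iff.1 hpriv₂.1
  have hn₁ := mt dCovers_Icc_iff.2 (hpriv₁.2 d₂ h₂ (Ne.symm hne))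
  have hn₂ := mt dCovers_Icc_iff.2 (hpriv₂.2 d₁ h₁ hne)
  have hd₁ := d₁.ne
  by_cases hmid : d₁.tail < d₁.head ∧ d₁.head < d₂.tail
  · exact hF.1.false_of_isPrivateCut_union ha₂ hpriv₂ hpriv₁ (by omega) (by omega) (by omega)
      (Finset.mem_Icc.2 (by omega)) (Finset.mem_Icc.2 (by omega))
  -- Both tails on one side: the private cut of the nearer link is entered by the other one.
  · omega

theorem NonShortenable.existsUnique_head_eq (hF : NonShortenable F) {v : Fin n} (hv : v ≠ 0) :
    ∃! d, d ∈ F ∧ d.head = v := by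
  obtain ⟨d, hd, hcov⟩ := hF.1 _ (isCut_Icc (Fin.pos_iff_ne_zero.2 hv) le_rfl)
  have hdv : d.head = v := by
    rw [dCovers_Icc_iff] at hcov
    exact le_antisymm hcov.2.1 hcov.1
  exact ⟨d, ⟨hd, hdv⟩, fun e he => hF.eq_of_head_eq he.1 hd (he.2.trans hdv.symm)⟩

theorem NonShortenable.not_descend_of_between (hF : NonShortenable F) (hd : d ∈ F)
    (hhead : ¬ Descend F 0 d.head) {x : Fin n}
    (hx : d.tail ≤ x ∧ x ≤ d.head ∨ d.head ≤ x ∧ x ≤ d.tail) : ¬ Descend F 0 x := by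
  have htail : ¬ Descend F 0 d.tail := fun h => hhead (h.tail ⟨d, hd, rfl, rfl⟩)
  intro hreach
  rcases eq_or_ne x d.tail with rfl | hxt
  · exact htail hreach
  rcases eq_or_ne x d.head with rfl | hxh
  · exact hhead hreach
  obtain ⟨a, b, ha, hxC, hpriv⟩ := hF.exists_isPrivateCut_mem hd (x := x) (by omega)
  have h0 : (0 : Fin n) ∉ Finset.Icc a b := by
    rw [Finset.mem_Icc]
    omega
  obtain ⟨e, he, hcov, hdesc⟩ := hreach.exists_dCovers h0 hxC
  by_cases hed : e = d
  · exact htail (hed ▸ hdesc)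
  · exact hpriv.2 e he hed hcov

theorem NonShortenable.descend_zero (hF : NonShortenable F) (v : Fin n) : Descend F 0 v := by
  classical
  by_contra hv
  let IsUnreachableIcc : Fin n × Fin n → Prop := fun p =>
    0 < p.1 ∧ p.1 ≤ p.2 ∧ ∀ x, p.1 ≤ x → x ≤ p.2 → ¬ Descend F 0 x
  have hv0 : 0 < v := Fin.pos_iff_ne_zero.2 fun h => hv (h ▸ Relation.ReflTransGen.refl)
  obtain ⟨⟨a, b⟩, hab, hmax⟩ := (Finset.univ.filter IsUnreachableIcc).exists_max_image
    (fun p => p.2.val - p.1.val) ⟨(v, v), Finset.mem_filter.2 ⟨Finset.mem_univ _,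
      hv0, le_rfl, fun x h₁ h₂ => le_antisymm h₂ h₁ ▸ hv⟩⟩
  obtain ⟨ha, hab, hbad⟩ : 0 < a ∧ a ≤ b ∧ ∀ x, a ≤ x → x ≤ b → ¬ Descend F 0 x :=
    (Finset.mem_filter.1 hab).2
  have hlongest : ∀ a' b' : Fin n, 0 < a' → a' ≤ b' → (∀ x, a' ≤ x → x ≤ b' → ¬ Descend F 0 x) →
      b'.val - a'.val ≤ b.val - a.val := fun a' b' h₁ h₂ h₃ =>
    hmax (a', b') (Finset.mem_filter.2 ⟨Finset.mem_univ _, h₁, h₂, h₃⟩)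
  obtain ⟨e, he, hcov⟩ := hF.1 _ (isCut_Icc ha hab)
  rw [dCovers_Icc_iff] at hcov
  have hhead : ¬ Descend F 0 e.head := hbad _ hcov.1 hcov.2.1
  have hspan := fun x => hF.not_descend_of_between he hhead (x := x)
  have htail0 : 0 < e.tail := by
    by_contra h0
    exact hspan e.tail (by omega) (le_antisymm (not_lt.1 h0) (Fin.zero_le _) ▸ .refl)
  -- The unreachable stretch `[a, b]` extends to the tail of `e`, against its maximality.
  rcases hcov.2.2 with hlt | hgt
  · have := hlongest e.tail b htail0 (by omega)
      fun x h₁ h₂ => if hx : x ≤ e.head then hspan x (by omega) else hbad x (by omega) h₂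
    omega
  · have := hlongest a e.tail ha (by omega)
      fun x h₁ h₂ => if hx : e.head ≤ x then hspan x (by omega) else hbad x h₁ (by omega)
    omega

theorem NonShortenable.parent_head (hF : NonShortenable F) (hd : d ∈ F) :
    parent F d.head = d.tail := by
  have h : ∃ e ∈ F, e.head = d.head := ⟨d, hd, rfl⟩
  rw [parent, dif_pos h, hF.eq_of_head_eq h.choose_spec.1 hd h.choose_spec.2]

theorem NonShortenable.exists_parent_iterate_eq_zero (hF : NonShortenable F) (v : Fin n) :
    ∃ k, (parent F)^[k] v = 0 := by
  induction hF.descend_zero v with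
  | refl => exact ⟨0, rfl⟩
  | tail _ hbc ih =>
    obtain ⟨k, hk⟩ := ih
    obtain ⟨d, hd, rfl, rfl⟩ := hbc
    exact ⟨k + 1, by rw [Function.iterate_succ_apply, hF.parent_head hd, hk]⟩

theorem NonShortenable.isAcyclic (hF : NonShortenable F) : (undirGraph F).IsAcyclic := by
  classical
  let depth v := Nat.find (hF.exists_parent_iterate_eq_zero v)
  have hdepth : ∀ d ∈ F, depth d.head = depth d.tail + 1 := fun d hd => by
    have hstep : ∀ k, (parent F)^[k + 1] d.head = (parent F)^[k] d.tail := fun k => by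
      rw [Function.iterate_succ_apply, hF.parent_head hd]
    show Nat.find _ = Nat.find _ + 1
    rw [Nat.find_comp_succ _ ⟨_, (hstep _).trans (Nat.find_spec
      (hF.exists_parent_iterate_eq_zero d.tail))⟩ (hF.head_ne_zero hd)]
    exact congrArg (· + 1) (Nat.find_congr' fun {k} => by rw [hstep k])
  refine SimpleGraph.isAcyclic_of_rank_parent depth (parent F) ?_
  rintro u w ⟨d, hd, ⟨rfl, rfl⟩ | ⟨rfl, rfl⟩⟩ hle
  · have := hdepth d hd
    omega
  · exact (hF.parent_head hd).symm

theorem NonShortenable.false_of_tail_le_tail_lt_head_lt_head (hF : NonShortenable F)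
    (h₁ : d₁ ∈ F) (h₂ : d₂ ∈ F) (ht : d₁.tail ≤ d₂.tail) (hth : d₂.tail < d₁.head)
    (hh : d₁.head < d₂.head) : False := by
  obtain ⟨a, b, -, hx, hcov, hpriv⟩ := hF.exists_isPrivateCut_mem h₂ (x := d₁.head) (by omega)
  rw [dCovers_Icc_iff] at hcov
  rw [Finset.mem_Icc] at hx
  exact hpriv d₁ h₁ (fun h => hh.ne (congrArg DLink.head h)) (dCovers_Icc_iff.2 (by omega))

theorem NonShortenable.false_of_head_lt_head_lt_tail_le_tail (hF : NonShortenable F)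
    (h₁ : d₁ ∈ F) (h₂ : d₂ ∈ F) (hh : d₁.head < d₂.head) (hht : d₂.head < d₁.tail)
    (ht : d₁.tail ≤ d₂.tail) : False := by
  obtain ⟨a, b, -, hx, hcov, hpriv⟩ := hF.exists_isPrivateCut_mem h₁ (x := d₂.head) (by omega)
  rw [dCovers_Icc_iff] at hcov
  rw [Finset.mem_Icc] at hx
  exact hpriv d₂ h₂ (fun h => hh.ne' (congrArg DLink.head h)) (dCovers_Icc_iff.2 (by omega))

theorem NonShortenable.false_of_tail_lt_head_lt_head_lt_tail (hF : NonShortenable F)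
    (h₁ : d₁ ∈ F) (h₂ : d₂ ∈ F) (h₁₂ : d₁.tail < d₂.head) (hh : d₂.head < d₁.head)
    (h₂₁ : d₁.head < d₂.tail) : False := by
  have hne : d₁ ≠ d₂ := fun h => hh.ne' (congrArg DLink.head h)
  obtain ⟨a₂, b₂, ha₂, hx₂, hpriv₂⟩ := hF.exists_isPrivateCut_mem h₂ (x := d₁.head) (by omega)
  obtain ⟨a₁, b₁, -, hx₁, hpriv₁⟩ := hF.exists_isPrivateCut_mem h₁ (x := d₂.head) (by omega)
  have hc₁ := dCovers_Icc_iff.1 hpriv₁.1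
  have hc₂ := dCovers_Icc_iff.1 hpriv₂.1
  have hn₁ := mt dCovers_Icc_iff.2 (hpriv₁.2 d₂ h₂ (Ne.symm hne))
  have hn₂ := mt dCovers_Icc_iff.2 (hpriv₂.2 d₁ h₁ hne)
  rw [Finset.mem_Icc] at hx₁ hx₂
  exact hF.1.false_of_isPrivateCut_union ha₂ hpriv₂ hpriv₁ (by omega) (by omega) (by omega)
    (Finset.mem_Icc.2 (by omega)) (Finset.mem_Icc.2 (by omega))

theorem NonShortenable.false_of_head_lt_tail_lt_tail_lt_head (hF : NonShortenable F)
    (h₁ : d₁ ∈ F) (h₂ : d₂ ∈ F) (h₁₂ : d₁.head < d₂.tail) (ht : d₂.tail < d₁.tail)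
    (h₂₁ : d₁.tail < d₂.head) : False := by
  obtain ⟨a₁, b₁, ha₁, hx₁, hpriv₁⟩ := hF.exists_isPrivateCut_mem h₁ (x := d₂.tail) (by omega)
  have hc₁ := dCovers_Icc_iff.1 hpriv₁.1
  rw [Finset.mem_Icc] at hx₁
  -- The second cut is taken through `b₁ + 1`, so that the two private cuts overlap or abut.
  obtain ⟨a₂, b₂, -, hx₂, hpriv₂⟩ :=
    hF.exists_isPrivateCut_mem h₂ (x := ⟨b₁.val + 1, by omega⟩) (by simp only [Fin.lt_def]; omega)
  have hc₂ := dCovers_Icc_iff.1 hpriv₂.1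
  simp only [Finset.mem_Icc, Fin.le_def] at hx₂
  exact hF.1.false_of_isPrivateCut_union ha₁ hpriv₁ hpriv₂ (by omega) (by omega) (by omega)
    (Finset.mem_Icc.2 (by omega)) (Finset.mem_Icc.2 (by omega))

theorem NonShortenable.not_crossing (hF : NonShortenable F) (h₁ : d₁ ∈ F) (h₂ : d₂ ∈ F) :
    ¬ Crossing d₁.toLink d₂.toLink := by
  intro hcr
  wlog hlt : d₁.toLink.lo < d₂.toLink.lo ∧ d₂.toLink.lo < d₁.toLink.hi ∧
      d₁.toLink.hi < d₂.toLink.hi generalizing d₁ d₂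
  · exact this h₂ h₁ hcr.symm (hcr.resolve_left hlt)
  simp only [DLink.toLink] at hlt
  rcases d₁.ne.lt_or_gt with o₁ | o₁ <;> rcases d₂.ne.lt_or_gt with o₂ | o₂ <;>
    simp only [min_eq_left, max_eq_right, min_eq_right, max_eq_left, o₁.le, o₂.le] at hlt
  · exact hF.false_of_tail_le_tail_lt_head_lt_head h₁ h₂ hlt.1.le hlt.2.1 hlt.2.2
  · exact hF.false_of_tail_lt_head_lt_head_lt_tail h₁ h₂ hlt.1 hlt.2.1 hlt.2.2
  · exact hF.false_of_head_lt_tail_lt_tail_lt_head h₁ h₂ hlt.1 hlt.2.1 hlt.2.2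
  · exact hF.false_of_head_lt_head_lt_tail_le_tail h₁ h₂ hlt.1 hlt.2.1 hlt.2.2.le

theorem NonShortenable.eq_of_tail_eq (hF : NonShortenable F) (h₁ : d₁ ∈ F) (h₂ : d₂ ∈ F)
    (ht : d₁.tail = d₂.tail)
    (hdir : (LeftGoing d₁ ∧ LeftGoing d₂) ∨ (RightGoing d₁ ∧ RightGoing d₂)) : d₁ = d₂ := by
  by_contra hne
  have hh : d₁.head ≠ d₂.head := fun hh => hne (DLink.ext ht hh)
  wlog hlt : d₁.head < d₂.head generalizing d₁ d₂
  · exact this h₂ h₁ ht.symm (hdir.imp And.symm And.symm) (Ne.symm hne) hh.symm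
      (lt_of_le_of_ne (not_lt.1 hlt) hh.symm)
  rcases hdir with ⟨-, hl₂⟩ | ⟨hr₁, -⟩
  · exact hF.false_of_head_lt_head_lt_tail_le_tail h₁ h₂ hlt (ht ▸ hl₂) ht.le
  · exact hF.false_of_tail_le_tail_lt_head_lt_head h₁ h₂ ht.le (ht ▸ hr₁) hlt

end NonShortenable

theorem structure_of_nonshortenable_general {n : ℕ}
    (F : Finset (DLink (n + 3))) (hF : NonShortenable F) :
    ((∀ v : Fin (n + 3), v ≠ 0 → ∃! d : DLink (n + 3), d ∈ F ∧ d.head = v) ∧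
        (∀ d ∈ F, d.head ≠ 0) ∧ (undirGraph F).IsAcyclic) ∧
      (∀ d₁ ∈ F, ∀ d₂ ∈ F, ¬ Crossing d₁.toLink d₂.toLink) ∧
      (∀ v : Fin (n + 3), ∀ d₁ ∈ F, ∀ d₂ ∈ F, d₁.tail = v → d₂.tail = v →
        ((LeftGoing d₁ ∧ LeftGoing d₂) ∨ (RightGoing d₁ ∧ RightGoing d₂)) →
          d₁ = d₂) :=
  ⟨⟨fun _ hv => hF.existsUnique_head_eq hv, fun _ hd => hF.head_ne_zero hd, hF.isAcyclic⟩,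
    fun _ h₁ _ h₂ => hF.not_crossing h₁ h₂,
    fun _ _ h₁ _ h₂ ht₁ ht₂ hdir => hF.eq_of_tail_eq h₁ h₂ (ht₁.trans ht₂.symm) hdir⟩

/-- structure of non-shortenable directed WRAP solutions.
(i) `(V, F)` is an `r`-arborescence: every `v ≠ r` has exactly one incoming
directed link, `r` has none, and `(V, F)` is acyclic disregarding orientation;
(ii) `F` is `G`-planar: no two of its links cross;
(iii) for every vertex `v`, at most one link of `F` with tail `v` is
left-going and at most one is right-going. -/
theorem structure_of_nonshortenable {n : ℕ}
    (L : Finset (Link (n + 3))) (c : Link (n + 3) → ℝ)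
    (F : Finset (DLink (n + 3))) (hF : NonShortenable F) :
    ((∀ v : Fin (n + 3), v ≠ 0 → ∃! d : DLink (n + 3), d ∈ F ∧ d.head = v) ∧
        (∀ d ∈ F, d.head ≠ 0) ∧ (undirGraph F).IsAcyclic) ∧
      (∀ d₁ ∈ F, ∀ d₂ ∈ F, ¬ Crossing d₁.toLink d₂.toLink) ∧
      (∀ v : Fin (n + 3), ∀ d₁ ∈ F, ∀ d₂ ∈ F, d₁.tail = v → d₂.tail = v →
        ((LeftGoing d₁ ∧ LeftGoing d₂) ∨ (RightGoing d₁ ∧ RightGoing d₂)) →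
          d₁ = d₂) :=
  structure_of_nonshortenable_general F hF
end

section
/- Let (G, L, c, r, e_r) be a rooted WRAP instance and F⃗ a non-shortenable directed WRAP solution. Then for every v ∈ V, the set of descendants of v in the arborescence (V, F⃗) (including v itself) is an interval of consecutive vertices along the path (V, E \ {e_r}). -/
variable {n : ℕ}

/-! If a cut `C` is covered by a single link `d` of `F`, every walk of `(V, F)` from the root
into `C` passes through `d`. Non-shortenability provides such a cut through any vertex `s` of the
span of `d` other than its tail: otherwise `d` could be shortened to `(s, head d)`, or dropped
when `s` is its head. Hence every vertex of the span is a descendant of the head of `d` as soon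
as it is reachable from the root, which all vertices are: a rightmost block `(p, M]` of
unreachable vertices would be entered by a link whose tail is unreachable, lies left of `p`, and
so has `p` in its span. Finally, a walk from `v` to `u` covers `[[v, u]]` by the spans of its
links, so the descendants of `v` form an order-connected set. -/

lemma zero_notMem_of_isCut [NeZero n] {C : Finset (Fin n)} (hC : IsCut C) : (0 : Fin n) ∉ C := by
  obtain ⟨a, b, ha, -, rfl⟩ := hC
  exact fun h => ha.not_ge (Finset.mem_Icc.mp h).1

lemma isCut_Ioc [NeZero n] {p M : Fin n} (h : p < M) : IsCut (Finset.Ioc p M) :=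
  ⟨Order.succ p, M, (Fin.zero_le p).trans_lt (Order.lt_succ_of_not_isMax h.not_isMax),
    Order.succ_le_of_lt h, (Finset.Icc_succ_left_eq_Ioc_of_not_isMax h.not_isMax M).symm⟩

lemma Descend.exists_dCovers_s1 {F : Finset (DLink n)} {a b : Fin n} {C : Finset (Fin n)}
    (h : Descend F a b) (ha : a ∉ C) (hb : b ∈ C) :
    ∃ f ∈ F, DCovers f C ∧ Descend F a f.tail ∧ Descend F f.head b := by
  induction h with
  | refl => exact absurd hb ha
  | @tail w u hw hstep ih =>
    by_cases hwC : w ∈ C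
    · obtain ⟨f, hf, hfC, hwalk, hfw⟩ := ih hwC
      exact ⟨f, hf, hfC, hwalk, hfw.tail hstep⟩
    · obtain ⟨d, hd, rfl, rfl⟩ := hstep
      exact ⟨d, hd, ⟨hwC, hb⟩, hw, .refl⟩

namespace NonShortenable

variable [NeZero n] {F : Finset (DLink n)}

lemma exists_isCut_covered_only_by (hF : NonShortenable F) {d : DLink n} (hd : d ∈ F)
    {s : Fin n} (hs : s ∈ Set.uIcc d.tail d.head) (hst : s ≠ d.tail) :
    ∃ C, IsCut C ∧ s ∈ C ∧ ∀ f ∈ F, DCovers f C → f = d := by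
  have unique_cover : ∀ C, IsCut C → (∀ f ∈ F.erase d, ¬ DCovers f C) →
      DCovers d C ∧ ∀ f ∈ F, DCovers f C → f = d := by
    intro C hC hnot
    have huniq : ∀ f ∈ F, DCovers f C → f = d := fun f hf hfC =>
      by_contra fun hfd => hnot f (Finset.mem_erase.mpr ⟨hfd, hf⟩) hfC
    obtain ⟨g, hg, hgC⟩ := hF.1 C hC
    exact ⟨huniq g hg hgC ▸ hgC, huniq⟩
  by_cases hsh : s = d.head
  · have hdrop := hF.2.1 d hd
    simp only [IsDirSolution, not_forall, exists_prop] at hdrop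
    obtain ⟨C, hC, hnot⟩ := hdrop
    obtain ⟨hdC, huniq⟩ := unique_cover C hC fun f hf hfC => hnot ⟨f, hf, hfC⟩
    exact ⟨C, hC, hsh ▸ hdC.2, huniq⟩
  · have hshort := hF.2.2 d hd ⟨s, d.head, hsh⟩ ⟨rfl, hs.1, hs.2⟩
      fun h => hst (congrArg DLink.tail h)
    simp only [IsDirSolution, not_forall, exists_prop] at hshort
    obtain ⟨C, hC, hnot⟩ := hshort
    obtain ⟨hdC, huniq⟩ :=
      unique_cover C hC fun f hf hfC => hnot ⟨f, Finset.mem_insert_of_mem hf, hfC⟩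
    have hsC : s ∈ C := by_contra fun hsC => hnot ⟨_, Finset.mem_insert_self _ _, hsC, hdC.2⟩
    exact ⟨C, hC, hsC, huniq⟩

lemma descend_through (hF : NonShortenable F) {d : DLink n} (hd : d ∈ F)
    {s : Fin n} (hs : s ∈ Set.uIcc d.tail d.head) (hst : s ≠ d.tail) (h0s : Descend F 0 s) :
    Descend F 0 d.tail ∧ Descend F d.head s := by
  obtain ⟨C, hC, hsC, huniq⟩ := hF.exists_isCut_covered_only_by hd hs hst
  obtain ⟨f, hf, hfC, h0f, hfs⟩ := h0s.exists_dCovers_s1 (zero_notMem_of_isCut hC) hsC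
  obtain rfl := huniq f hf hfC
  exact ⟨h0f, hfs⟩

lemma descend_zero_s1 (hF : NonShortenable F) (w : Fin n) : Descend F 0 w := by
  classical
  by_contra hw
  obtain ⟨M, hMB, hMmax⟩ :=
    (Finset.univ.filter fun u => ¬ Descend F 0 u).exists_max_image id ⟨w, by simpa using hw⟩
  simp only [Finset.mem_filter, Finset.mem_univ, true_and, id] at hMB hMmax
  have hM0 : 0 < M := by
    refine (Fin.zero_le M).lt_of_ne ?_
    rintro rfl
    exact hMB .refl
  obtain ⟨p, hpR, hpmax⟩ :=
    (Finset.univ.filter fun y => y < M ∧ Descend F 0 y).exists_max_image id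
      ⟨0, by simpa using ⟨hM0, .refl⟩⟩
  simp only [Finset.mem_filter, Finset.mem_univ, true_and, id] at hpR hpmax
  obtain ⟨hpM, h0p⟩ := hpR
  have hgap : ∀ y ∈ Finset.Ioc p M, ¬ Descend F 0 y := by
    intro y hy h0y
    obtain ⟨hpy, hyM⟩ := Finset.mem_Ioc.mp hy
    rcases hyM.lt_or_eq with hyM | rfl
    · exact (hpmax y ⟨hyM, h0y⟩).not_gt hpy
    · exact hMB h0y
  obtain ⟨e, he, het, heh⟩ := hF.1 _ (isCut_Ioc hpM)
  have h0et : ¬ Descend F 0 e.tail := fun h => hgap _ heh (h.tail ⟨e, he, rfl, rfl⟩)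
  have htp : e.tail < p := by
    have : e.tail ≤ p := by
      by_contra! hpt
      exact het (Finset.mem_Ioc.mpr ⟨hpt, hMmax _ h0et⟩)
    exact this.lt_of_ne fun h => h0et (h ▸ h0p)
  have hph : p < e.head := (Finset.mem_Ioc.mp heh).1
  exact h0et (hF.descend_through he (Set.mem_uIcc.mpr (.inl ⟨htp.le, hph.le⟩)) htp.ne'
    h0p).1

lemma descend_head (hF : NonShortenable F) {d : DLink n} (hd : d ∈ F)
    {s : Fin n} (hs : s ∈ Set.uIcc d.tail d.head) (hst : s ≠ d.tail) : Descend F d.head s :=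
  (hF.descend_through hd hs hst (hF.descend_zero_s1 s)).2

lemma uIcc_subset_descendants (hF : NonShortenable F) {v u : Fin n} (hvu : Descend F v u) :
    Set.uIcc v u ⊆ {x | Descend F v x} := by
  induction hvu with
  | refl =>
    rw [Set.uIcc_self, Set.singleton_subset_iff]
    exact .refl
  | @tail w u hvw hwu ih =>
    intro x hx
    rcases Set.uIcc_subset_uIcc_union_uIcc hx with hx | hx
    · exact ih hx
    · obtain ⟨d, hd, rfl, rfl⟩ := hwu
      by_cases hxt : x = d.tail
      · exact hxt ▸ hvw
      · exact (hvw.tail ⟨d, hd, rfl, rfl⟩).trans (hF.descend_head hd hx hxt)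

lemma ordConnected_descendants (hF : NonShortenable F) (v : Fin n) :
    {u | Descend F v u}.OrdConnected :=
  Set.ordConnected_of_uIcc_subset_left fun _ hu => hF.uIcc_subset_descendants hu

end NonShortenable

theorem descendants_form_interval_general {n : ℕ}
    (F : Finset (DLink (n + 3))) (hF : NonShortenable F) (v : Fin (n + 3)) :
    ∃ a b : Fin (n + 3), {u : Fin (n + 3) | Descend F v u} = Set.Icc a b :=
  ⟨_, _, (Set.Nonempty.ordConnected_iff_of_bdd' ⟨v, .refl⟩).mp (hF.ordConnected_descendants v)⟩

/-- for a non-shortenable directed WRAP solution `F`, the set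
of descendants of any vertex `v` in the arborescence `(V, F)` is an interval
of consecutive vertices along the path `(V, E \ {e_r})`. -/
theorem descendants_form_interval {n : ℕ}
    (L : Finset (Link (n + 3))) (c : Link (n + 3) → ℝ)
    (F : Finset (DLink (n + 3))) (hF : NonShortenable F) (v : Fin (n + 3)) :
    ∃ a b : Fin (n + 3), {u : Fin (n + 3) | Descend F v u} = Set.Icc a b :=
  descendants_form_interval_general F hF v
end

section
/- Let (G, L, c, r, e_r) be a rooted WRAP instance, K ⊆ L, and C ∈ C_G. Then δ_K(C) ≠ ∅ (some link of K has exactly one endpoint in C) if and only if there exists a vertex v ∈ C that is connected to a vertex w ∈ V \ C in the link intersection graph H[K]. -/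
variable {n : ℕ}

/-!
If no link of `K` crosses the interval `C`, then every link of `K` with an endpoint in `C` has
both endpoints in `C`. A link intersecting such a link shares one of its endpoints or has an
endpoint strictly between them, hence again in `C` since `C` is an interval. So, by induction
along a path of `H[K]`, nothing reachable from `C` ever leaves `C`. Conversely, a link crossing
`C` connects its own two endpoints, one inside and one outside `C`.
-/

theorem IsCut.ordConnected [NeZero n] {C : Finset (Fin n)} (hC : IsCut C) :
    (C : Set (Fin n)).OrdConnected := by
  obtain ⟨a, b, -, -, rfl⟩ := hC
  rw [Finset.coe_Icc]
  exact Set.ordConnected_Icc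

theorem Intersects.lo_mem_or_hi_mem {ℓ f : Link n} {S : Set (Fin n)} (hS : S.OrdConnected)
    (hℓf : Intersects ℓ f) (hlo : ℓ.lo ∈ S) (hhi : ℓ.hi ∈ S) : f.lo ∈ S ∨ f.hi ∈ S := by
  rcases hℓf with (h | h | h | h) | (⟨h₁, h₂, -⟩ | ⟨-, h₂, h₃⟩)
  · exact Or.inl (h ▸ hlo)
  · exact Or.inr (h ▸ hlo)
  · exact Or.inl (h ▸ hhi)
  · exact Or.inr (h ▸ hhi)
  · exact Or.inl (hS.out hlo hhi ⟨h₁.le, h₂.le⟩)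
  · exact Or.inr (hS.out hlo hhi ⟨h₂.le, h₃.le⟩)

theorem lo_mem_and_hi_mem_of_cutLinks_eq_empty {K : Finset (Link n)} {C : Finset (Fin n)}
    (hK : cutLinks K C = ∅) {ℓ : Link n} (hℓ : ℓ ∈ K) (h : ℓ.lo ∈ C ∨ ℓ.hi ∈ C) :
    ℓ.lo ∈ C ∧ ℓ.hi ∈ C := by
  have hcross : ¬ crossesCut ℓ C := fun hc =>
    Finset.notMem_empty ℓ (hK ▸ (Finset.mem_filter.mpr ⟨hℓ, hc⟩ : ℓ ∈ cutLinks K C))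
  unfold crossesCut at hcross
  tauto

theorem lo_mem_and_hi_mem_of_reflTransGen {K : Finset (Link n)} {C : Finset (Fin n)}
    (hC : (C : Set (Fin n)).OrdConnected) (hK : cutLinks K C = ∅) {ℓ f : Link n}
    (hℓ : ℓ.lo ∈ C ∧ ℓ.hi ∈ C)
    (hpath : Relation.ReflTransGen (fun a b => a ∈ K ∧ b ∈ K ∧ Intersects a b) ℓ f) :
    f.lo ∈ C ∧ f.hi ∈ C := by
  induction hpath with
  | refl => exact hℓ
  | tail _ hstep ih =>
    obtain ⟨-, hgK, hint⟩ := hstep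
    exact lo_mem_and_hi_mem_of_cutLinks_eq_empty hK hgK (hint.lo_mem_or_hi_mem hC ih.1 ih.2)

theorem connVert_of_incident {K : Finset (Link n)} {ℓ : Link n} (hℓ : ℓ ∈ K) {u w : Fin n}
    (hu : ℓ.Incident u) (hw : ℓ.Incident w) : ConnVert K u w :=
  ⟨ℓ, hℓ, ℓ, hℓ, hu, hw, .refl⟩

theorem cut_covered_iff_connected_outside_general {n : ℕ}
    (K : Finset (Link (n + 3)))
    (C : Finset (Fin (n + 3))) (hC : IsCut C) :
    (cutLinks K C).Nonempty ↔
      ∃ v ∈ C, ∃ w : Fin (n + 3), w ∉ C ∧ ConnVert K v w := by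
  constructor
  · rintro ⟨ℓ, hℓ⟩
    obtain ⟨hℓK, ⟨hlo, hhi⟩ | ⟨hlo, hhi⟩⟩ := Finset.mem_filter.mp hℓ
    · exact ⟨ℓ.lo, hlo, ℓ.hi, hhi, connVert_of_incident hℓK (.inl rfl) (.inr rfl)⟩
    · exact ⟨ℓ.hi, hhi, ℓ.lo, hlo, connVert_of_incident hℓK (.inr rfl) (.inl rfl)⟩
  · rintro ⟨v, hv, w, hw, ℓ, hℓK, f, -, hℓv, hfw, hpath⟩
    by_contra hempty
    rw [Finset.not_nonempty_iff_eq_empty] at hempty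
    have hℓC : ℓ.lo ∈ C ∧ ℓ.hi ∈ C := lo_mem_and_hi_mem_of_cutLinks_eq_empty hempty hℓK <| by
      rcases hℓv with rfl | rfl
      exacts [.inl hv, .inr hv]
    have hfC := lo_mem_and_hi_mem_of_reflTransGen hC.ordConnected hempty hℓC hpath
    rcases hfw with rfl | rfl
    exacts [hw hfC.1, hw hfC.2]

/-- for `K ⊆ L` and a 2-cut `C ∈ C_G`, we have
`δ_K(C) ≠ ∅` iff some vertex of `C` is connected to a vertex outside of `C`
in the link intersection graph `H[K]`. -/
theorem cut_covered_iff_connected_outside {n : ℕ}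
    (L : Finset (Link (n + 3))) (c : Link (n + 3) → ℝ)
    (K : Finset (Link (n + 3))) (hK : K ⊆ L)
    (C : Finset (Fin (n + 3))) (hC : IsCut C) :
    (cutLinks K C).Nonempty ↔
      ∃ v ∈ C, ∃ w : Fin (n + 3), w ∉ C ∧ ConnVert K v w :=
  cut_covered_iff_connected_outside_general K C hC
end
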